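/- Let C, D be finitary extensive categories with finite products, L ⊣ R : D → C with L and R both preserving finite coproducts and finite products. Then for every decidable object X of C, the unit σ_X : X → R(L X) is a monomorphism. -/

import Mathlib

/-!
The unit square of `σ : 𝟭 ⟶ L ⋙ R` at a coproduct inclusion is a pullback: `L ⋙ R` preserves
binary coproducts, so both rows are coproducts and extensivity (van Kampen) makes each summand
square cartesian. Applied to the summand `Δ_X : X ⟶ X ⨯ X` and composed with the product
comparison, this exhibits `Δ_X` as the pullback of `Δ_{RLX}` along `σ_X × σ_X`, and such a map
`σ_X` is monic: `a ≫ σ_X = b ≫ σ_X` makes `(a, b)` factor through the diagonal.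
-/

open CategoryTheory CategoryTheory.Limits

/-- A morphism `i : X ⟶ Z` is a (binary coproduct) summand if there is a morphism
`j : Y ⟶ Z` such that the cospan `X ⟶ Z ⟵ Y` is a coproduct cocone. -/
def IsSummand {C : Type*} [Category C] {X Z : C} (i : X ⟶ Z) : Prop :=
  ∃ (Y : C) (j : Y ⟶ Z), Nonempty (IsColimit (BinaryCofan.mk i j))

/-- An object `X` is decidable if its diagonal `X ⟶ X ⨯ X` is a coproduct summand. -/
noncomputable def IsDecidableObj {C : Type*} [Category C] [HasBinaryProducts C] (X : C) : Prop :=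
  IsSummand (diag X)

theorem mono_of_isPullback_diag_prodMap {C : Type*} [Category C] {X Y : C}
    [HasBinaryProduct X X] [HasBinaryProduct Y Y] {f : X ⟶ Y}
    (h : IsPullback (diag X) f (prod.map f f) (diag Y)) : Mono f := by
  refine ⟨fun a b hab => ?_⟩
  have w : prod.lift a b ≫ prod.map f f = (a ≫ f) ≫ diag Y := by
    ext <;> simp [hab]
  have hlift : h.lift (prod.lift a b) (a ≫ f) w ≫ diag X = prod.lift a b := h.lift_fst _ _ _
  have ha := hlift =≫ prod.fst
  have hb := hlift =≫ prod.snd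
  simp only [Category.assoc, diag, prod.lift_fst, prod.lift_snd, Category.comp_id] at ha hb
  exact ha.symm.trans hb

theorem IsSummand.isPullback_naturality {C E : Type*} [Category C] [Category E]
    [FinitaryExtensive E] {F G : C ⥤ E}
    [PreservesColimitsOfShape (Discrete WalkingPair) F]
    [PreservesColimitsOfShape (Discrete WalkingPair) G]
    (σ : F ⟶ G) {X Z : C} {i : X ⟶ Z} (hi : IsSummand i) :
    IsPullback (F.map i) (σ.app X) (σ.app Z) (G.map i) := by
  obtain ⟨Y, j, ⟨hc⟩⟩ := hi
  have hF := mapIsColimitOfPreservesOfIsColimit F i j hc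
  have hG := mapIsColimitOfPreservesOfIsColimit G i j hc
  exact (((BinaryCofan.isVanKampen_iff _).mp (FinitaryExtensive.vanKampen _ hG)
    (BinaryCofan.mk (F.map i) (F.map j)) (σ.app X) (σ.app Y) (σ.app Z)
    (σ.naturality i).symm (σ.naturality j).symm).mp ⟨hF⟩).1

theorem map_diag_comp_prodComparison {C D : Type*} [Category C] [Category D]
    (G : C ⥤ D) (X : C) [HasBinaryProduct X X] [HasBinaryProduct (G.obj X) (G.obj X)] :
    G.map (diag X) ≫ prodComparison G X X = diag (G.obj X) := by
  ext <;> simp only [Category.assoc, prodComparison_fst, prodComparison_snd, ← G.map_comp,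
    diag, prod.lift_fst, prod.lift_snd, G.map_id]

theorem isPullback_diag_prodMap_of_isPullback_naturality {C : Type*} [Category C]
    [HasBinaryProducts C] {G : C ⥤ C} (σ : 𝟭 C ⟶ G) {X : C} [PreservesLimit (pair X X) G]
    (h : IsPullback (diag X) (σ.app X) (σ.app (X ⨯ X)) (G.map (diag X))) :
    IsPullback (diag X) (σ.app X) (prod.map (σ.app X) (σ.app X)) (diag (G.obj X)) := by
  have hσ : σ.app (X ⨯ X) ≫ prodComparison G X X = prod.map (σ.app X) (σ.app X) := by
    ext <;> simp [← σ.naturality]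
  exact h.of_iso (Iso.refl _) (Iso.refl _) (Iso.refl _) (asIso (prodComparison G X X))
    (by simp) (by simp) (by simpa using hσ) (by simpa using map_diag_comp_prodComparison G X)

theorem unit_mono_of_decidable_general
    {C D : Type*} [Category C] [Category D] [FinitaryExtensive C]
    [HasFiniteProducts C]
    (L : C ⥤ D) (R : D ⥤ C) (adj : L ⊣ R)
    [PreservesFiniteCoproducts L] [PreservesFiniteCoproducts R]
    [PreservesFiniteProducts L] [PreservesFiniteProducts R] :
    ∀ X : C, IsDecidableObj X → Mono (adj.unit.app X) := fun X hX =>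
  mono_of_isPullback_diag_prodMap <| isPullback_diag_prodMap_of_isPullback_naturality adj.unit <|
    hX.isPullback_naturality adj.unit

/-- For an adjunction `L ⊣ R` between finitary extensive categories with finite products
in which both functors preserve finite coproducts and finite products, the unit is a
monomorphism at every decidable object. -/
theorem unit_mono_of_decidable
    {C D : Type*} [Category C] [Category D] [FinitaryExtensive C] [FinitaryExtensive D]
    [HasFiniteProducts C] [HasFiniteProducts D]
    (L : C ⥤ D) (R : D ⥤ C) (adj : L ⊣ R)
    [PreservesFiniteCoproducts L] [PreservesFiniteCoproducts R]
    [PreservesFiniteProducts L] [PreservesFiniteProducts R] :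
    ∀ X : C, IsDecidableObj X → Mono (adj.unit.app X) :=
  unit_mono_of_decidable_general L R adj
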